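/- For any permutation σ of {1,...,n} and reals 0 < a_1 ≤ ... ≤ a_n with a_1^{a_n} ≥ e^{-1}, one has ∑_{i=1}^n a_i^{a_{n+1-i}} ≤ ∑_{i=1}^n a_i^{a_{σ(i)}} ≤ ∑_{i=1}^n a_i^{a_i}. -/

import Mathlib

/-!
The kernel `(i, j) ↦ a i ^ a j` is supermodular: for `c ≤ d` the map
`t ↦ t ^ d - t ^ c` has derivative `(d * t ^ d - c * t ^ c) / t`, which is nonnegative as soon as
`d * log t ≥ -1`, i.e. `t ^ d ≥ e⁻¹`: then `d * t ^ (d - c) ≥ d * (1 + (d - c) * log t) ≥ c`.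
For a supermodular kernel `f`, exchanging two values of `σ` so as to fix the largest moved index
never decreases `∑ i, f i (σ i)`; hence the identity maximises the sum, and, applied to the
order-reversed kernel, the reversal `Fin.rev` minimises it.
-/

open Real Finset Equiv

def Supermodular {ι κ α : Type*} [Preorder ι] [Preorder κ] [Add α] [LE α]
    (f : ι → κ → α) : Prop :=
  ∀ ⦃i j⦄, i ≤ j → ∀ ⦃k l⦄, k ≤ l → f i l + f j k ≤ f i k + f j l

theorem mul_rpow_le_mul_rpow {t c d : ℝ} (ht : 0 < t) (hd : 0 ≤ d) (hcd : c ≤ d)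
    (h : exp (-1) ≤ t ^ d) : c * t ^ c ≤ d * t ^ d := by
  simp only [rpow_def_of_pos ht] at h ⊢
  have hdu : -1 ≤ log t * d := exp_le_exp.mp h
  have hexp : log t * (d - c) + 1 ≤ exp (log t * (d - c)) := add_one_le_exp _
  have hc_le : c ≤ d * exp (log t * (d - c)) := by
    nlinarith [mul_nonneg (sub_nonneg.mpr hcd) (neg_le_iff_add_nonneg.mp hdu)]
  calc c * exp (log t * c) ≤ d * exp (log t * (d - c)) * exp (log t * c) := by gcongr
    _ = d * exp (log t * d) := by rw [mul_assoc, ← exp_add]; ring_nf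

theorem rpow_add_rpow_le_rpow_add_rpow {x y c d : ℝ} (hx : 0 < x) (hxy : x ≤ y) (hd : 0 ≤ d)
    (hcd : c ≤ d) (h : exp (-1) ≤ x ^ d) : x ^ d + y ^ c ≤ x ^ c + y ^ d := by
  have hderiv : ∀ t ∈ Set.Ici x, HasDerivAt (fun t => t ^ d - t ^ c)
      (d * t ^ (d - 1) - c * t ^ (c - 1)) t := fun t ht =>
    (hasDerivAt_rpow_const (Or.inl (hx.trans_le ht).ne')).sub
      (hasDerivAt_rpow_const (Or.inl (hx.trans_le ht).ne'))
  have hmono : MonotoneOn (fun t => t ^ d - t ^ c) (Set.Ici x) := by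
    refine monotoneOn_of_hasDerivWithinAt_nonneg (convex_Ici x)
      (fun t ht => (hderiv t ht).continuousAt.continuousWithinAt)
      (fun t ht => (hderiv t (interior_subset ht)).hasDerivWithinAt) fun t ht => ?_
    rw [interior_Ici] at ht
    have ht0 : 0 < t := hx.trans ht
    rw [rpow_sub_one ht0.ne', rpow_sub_one ht0.ne', mul_div_assoc', mul_div_assoc', sub_nonneg]
    have hbound : exp (-1) ≤ t ^ d := h.trans (rpow_le_rpow hx.le ht.le hd)
    exact div_le_div_of_nonneg_right (mul_rpow_le_mul_rpow ht0 hd hcd hbound) ht0.le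
  have := hmono Set.self_mem_Ici hxy hxy
  dsimp only at this
  linarith

theorem Equiv.Perm.setOf_trans_swap_apply_ne_subset {ι : Type*} [DecidableEq ι] {σ : Perm ι}
    {a : ι} {s : Set ι} (hσ : {x | σ x ≠ x} ⊆ insert a s) :
    {x | σ.trans (swap a (σ a)) x ≠ x} ⊆ s := by
  intro x hx
  have hxa : x ≠ a := by rintro rfl; simp at hx
  refine (hσ fun hσx => hx ?_).resolve_left hxa
  simp only [coe_trans, Function.comp_apply, hσx]
  exact swap_apply_of_ne_of_ne hxa fun h => hxa (σ.injective (hσx.trans h))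

namespace Supermodular

variable {ι α : Type*} [LinearOrder ι] [AddCommMonoid α] [PartialOrder α] [IsOrderedAddMonoid α]
  {f : ι → ι → α}

theorem sum_comp_perm_le_sum_of_support_subset (hf : Supermodular f) {s : Finset ι}
    {σ : Perm ι} (hσ : {x | σ x ≠ x} ⊆ s) : ∑ i ∈ s, f i (σ i) ≤ ∑ i ∈ s, f i i := by
  classical
  induction s using Finset.induction_on_max generalizing σ with
  | empty => simp
  | insert a s hlt ih =>
    have has : a ∉ s := fun h => (hlt a h).false
    have hmem : ∀ x, σ x ≠ x → x ≠ a → x ∈ s := fun x hx hxa =>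
      mem_of_mem_insert_of_ne (hσ hx) hxa
    rw [sum_insert has, sum_insert has]
    by_cases hfix : σ a = a
    · refine add_le_add (le_of_eq (by rw [hfix])) (ih fun x hx => hmem x hx ?_)
      rintro rfl; exact hx hfix
    set b := σ.symm a
    have hb : σ b = a := σ.apply_symm_apply a
    have hba : b ≠ a := fun h => hfix (h ▸ hb)
    have hbs : b ∈ s := hmem b (hb ▸ hba.symm) hba
    have hσas : σ a ∈ s := hmem (σ a) (fun h => hfix (σ.injective h)) hfix
    set τ := σ.trans (swap a (σ a))
    have hτ : ∀ x ∈ s, x ≠ b → τ x = σ x := fun x hx hxb => swap_apply_of_ne_of_ne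
      (fun h => hxb (σ.injective (h.trans hb.symm))) (fun h => has (σ.injective h ▸ hx))
    have hτs : {x | τ x ≠ x} ⊆ s :=
      Perm.setOf_trans_swap_apply_ne_subset (by rwa [← coe_insert])
    have hswap : f b a + f a (σ a) ≤ f b (σ a) + f a a :=
      hf (hlt b hbs).le (hlt _ hσas).le
    calc f a (σ a) + ∑ i ∈ s, f i (σ i)
        = f b a + f a (σ a) + ∑ i ∈ s.erase b, f i (σ i) := by
          rw [← add_sum_erase s _ hbs, hb]; abel
      _ ≤ f b (σ a) + f a a + ∑ i ∈ s.erase b, f i (σ i) := by gcongr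
      _ = f a a + ∑ i ∈ s, f i (τ i) := by
          rw [← add_sum_erase s _ hbs, sum_congr rfl fun x hx =>
            congrArg (f x) (hτ x (mem_of_mem_erase hx) (ne_of_mem_erase hx))]
          simp only [τ, coe_trans, Function.comp_apply, hb, swap_apply_left]
          abel
      _ ≤ f a a + ∑ i ∈ s, f i i := add_le_add_right (ih hτs) _

variable [Fintype ι]

theorem sum_comp_perm_le_sum (hf : Supermodular f) (σ : Perm ι) :
    ∑ i, f i (σ i) ≤ ∑ i, f i i :=
  hf.sum_comp_perm_le_sum_of_support_subset fun x _ => mem_coe.mpr (mem_univ x)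

theorem sum_comp_antitone_le_sum_comp_perm (hf : Supermodular f) {τ : Perm ι}
    (hτ : Antitone τ) (σ : Perm ι) : ∑ i, f i (τ i) ≤ ∑ i, f i (σ i) := by
  have hdual : Supermodular fun i j => OrderDual.toDual (f i (τ j)) :=
    fun i j hij k l hkl => hf hij (hτ hkl)
  have h := hdual.sum_comp_perm_le_sum (τ⁻¹ * σ)
  simp only [Perm.mul_apply, Perm.coe_inv, apply_symm_apply] at h
  exact h

end Supermodular

theorem le_rpow_of_le_rpow_of_le_one {b x₀ x d₀ d : ℝ} (hb : b ≤ 1) (hx₀ : 0 < x₀) (hx : x₀ ≤ x)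
    (hd : 0 ≤ d) (hd₀ : d ≤ d₀) (h : b ≤ x₀ ^ d₀) : b ≤ x ^ d := by
  rcases le_or_gt x₀ 1 with hx₀1 | h1x₀
  · calc b ≤ x₀ ^ d₀ := h
      _ ≤ x₀ ^ d := rpow_le_rpow_of_exponent_ge hx₀ hx₀1 hd₀
      _ ≤ x ^ d := rpow_le_rpow hx₀.le hx hd
  · exact hb.trans (one_le_rpow (h1x₀.le.trans hx) hd)

theorem supermodular_rpow {ι : Type*} [Preorder ι] {a : ι → ℝ} (hpos : ∀ i, 0 < a i)
    (hmono : Monotone a) (hbound : ∀ i j, exp (-1) ≤ a i ^ a j) :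
    Supermodular fun i j => a i ^ a j :=
  fun i _ hij _ _ hkl =>
    rpow_add_rpow_le_rpow_add_rpow (hpos i) (hmono hij) (hpos _).le (hmono hkl) (hbound _ _)

theorem stmt_5 (n : ℕ) (hn : 2 ≤ n) (σ : Equiv.Perm (Fin n)) (a : Fin n → ℝ)
    (hpos : ∀ i, 0 < a i) (hmono : Monotone a)
    (hC : a ⟨0, by omega⟩ ^ a ⟨n - 1, by omega⟩ ≥ Real.exp (-1)) :
    ∑ i : Fin n, a i ^ a (Fin.rev i) ≤ ∑ i : Fin n, a i ^ a (σ i) ∧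
      ∑ i : Fin n, a i ^ a (σ i) ≤ ∑ i : Fin n, a i ^ a i := by
  have hbound : ∀ i j, exp (-1) ≤ a i ^ a j := fun i j =>
    le_rpow_of_le_rpow_of_le_one (exp_le_one_iff.mpr (by norm_num)) (hpos _)
      (hmono (Fin.le_iff_val_le_val.mpr (Nat.zero_le i))) (hpos j).le
      (hmono (Fin.le_iff_val_le_val.mpr (Nat.le_sub_one_of_lt j.isLt))) hC
  have hsup := supermodular_rpow hpos hmono hbound
  exact ⟨hsup.sum_comp_antitone_le_sum_comp_perm (τ := Fin.revPerm) Fin.rev_anti σ,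
    hsup.sum_comp_perm_le_sum σ⟩
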